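/- Let α ∈ (0,1) and f: {z ∈ ℂ : |z| > 1} → ℂ, f(z) = z(1-z^{-1})^α (principal branch via the binomial series). Then f maps real arguments to real values in the sense that f(ℝ ∩ {|z|>1}) = (-∞, -2^α) ∪ (0, ∞); consequently, for real λ, λ ∉ ran f if and only if λ ∈ [-2^α, 0]. -/

import Mathlib

/-- The generalized binomial coefficient `C(α, n) = α(α-1)⋯(α-n+1)/n!`. -/
noncomputable def gbc (α : ℂ) (n : ℕ) : ℂ :=
  (descPochhammer ℂ n).eval α / n.factorial

/-- `f(z) = z (1 - z⁻¹)^α`, with `(1 - z⁻¹)^α` given by the binomial series. -/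
noncomputable def symbolF (α : ℝ) (z : ℂ) : ℂ :=
  z * ∑' k : ℕ, ((-1 : ℂ) ^ k * gbc (α : ℂ) k) * z⁻¹ ^ k

open Complex Set Real

lemma gbc_zero (α : ℂ) : gbc α 0 = 1 := by simp [gbc]

lemma gbc_succ_eq (α : ℂ) (k : ℕ) :
    gbc α (k + 1) = gbc α k * (α - k) / ((k : ℂ) + 1) := by
  have h : (descPochhammer ℂ (k+1)).eval α = (descPochhammer ℂ k).eval α * (α - k) := by
    rw [descPochhammer_succ_right]
    simp [Polynomial.eval_mul]
  have hk : ((k:ℂ) + 1) ≠ 0 := Nat.cast_add_one_ne_zero k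
  have hf : ((k.factorial : ℂ)) ≠ 0 := by
    exact_mod_cast Nat.cast_ne_zero.mpr k.factorial_ne_zero
  simp only [gbc, h, Nat.factorial_succ]
  push_cast
  rw [div_mul_eq_mul_div, div_div]
  congr 1
  ring

lemma gbc_succ (α : ℂ) (k : ℕ) :
    gbc α (k + 1) * ((k : ℂ) + 1) = gbc α k * (α - k) := by
  have hk : ((k:ℂ) + 1) ≠ 0 := Nat.cast_add_one_ne_zero k
  rw [gbc_succ_eq, div_mul_cancel₀ _ hk]

lemma abs_sub_nat_le {α : ℝ} (hα : α ∈ Set.Ioo (0:ℝ) 1) (k : ℕ) :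
    ‖(α : ℂ) - (k : ℂ)‖ ≤ (k : ℝ) + 1 := by
  rw [show ((α:ℂ) - (k:ℂ)) = (((α - k : ℝ)) : ℂ) by push_cast; ring, Complex.norm_real, Real.norm_eq_abs]
  have h0 : (0:ℝ) ≤ k := Nat.cast_nonneg k
  rw [abs_le]
  constructor <;> [linarith [hα.1]; linarith [hα.2]]

lemma gbc_abs_le {α : ℝ} (hα : α ∈ Set.Ioo (0:ℝ) 1) :
    ∀ k, ‖gbc (α:ℂ) k‖ ≤ 1 := by
  intro k
  induction k with
  | zero => simp [gbc_zero]
  | succ k ih =>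
    rw [gbc_succ_eq, norm_div, norm_mul]
    have h2 : ‖(k:ℂ)+1‖ = (k:ℝ)+1 := by
      rw [show ((k:ℂ)+1) = (((k:ℝ)+1 : ℝ):ℂ) by push_cast; ring, Complex.norm_real, Real.norm_eq_abs,
        abs_of_pos (by positivity)]
    rw [h2, div_le_one (by positivity)]
    calc ‖gbc (α:ℂ) k‖ * ‖(α:ℂ) - k‖ ≤ 1 * ((k:ℝ)+1) :=
          mul_le_mul ih (abs_sub_nat_le hα k) (norm_nonneg _) zero_le_one
    _ = (k:ℝ)+1 := one_mul _

lemma gbc_conj (α : ℝ) (k : ℕ) : (starRingEnd ℂ) (gbc (α:ℂ) k) = gbc (α:ℂ) k := by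
  induction k with
  | zero => simp [gbc_zero]
  | succ k ih =>
    rw [gbc_succ_eq, map_div₀, map_mul, ih, map_sub, Complex.conj_ofReal, map_natCast,
      map_add, map_natCast, map_one]

lemma term_norm_le {α : ℝ} (hα : α ∈ Set.Ioo (0:ℝ) 1) (x : ℂ) (k : ℕ) :
    ‖((-1:ℂ)^k * gbc (α:ℂ) k) * x ^ k‖ ≤ ‖x‖ ^ k := by
  rw [norm_mul, norm_mul, norm_pow, norm_pow, norm_neg, norm_one, one_pow, one_mul]
  exact mul_le_of_le_one_left (by positivity) (gbc_abs_le hα k)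

lemma summable_series {α : ℝ} (hα : α ∈ Set.Ioo (0:ℝ) 1) {x : ℂ} (hx : ‖x‖ < 1) :
    Summable (fun k : ℕ => ((-1:ℂ)^k * gbc (α:ℂ) k) * x ^ k) :=
  Summable.of_norm_bounded (summable_geometric_of_lt_one (norm_nonneg x) hx)
    (term_norm_le hα x)

lemma series_eq_cpow {α : ℝ} (hα : α ∈ Set.Ioo (0:ℝ) 1) {x : ℂ} (hx : ‖x‖ < 1) :
    ∑' k : ℕ, ((-1:ℂ)^k * gbc (α:ℂ) k) * x ^ k = (1 - x) ^ (α:ℂ) := by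
  set c : ℕ → ℂ := fun k => (-1:ℂ)^k * gbc (α:ℂ) k with hc
  have habs : ∀ k, ‖c k‖ ≤ 1 := by
    intro k
    rw [hc, norm_mul, norm_pow, norm_neg, norm_one, one_pow, one_mul]
    exact gbc_abs_le hα k
  have hck : ∀ k : ℕ, c (k+1) * ((k:ℂ)+1) = -((α:ℂ) - k) * c k := by
    intro k
    calc c (k+1) * ((k:ℂ)+1) = (-1:ℂ)^(k+1) * (gbc (α:ℂ) (k+1) * ((k:ℂ)+1)) := by
          rw [hc]; ring
    _ = (-1:ℂ)^(k+1) * (gbc (α:ℂ) k * ((α:ℂ) - k)) := by rw [gbc_succ]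
    _ = -((α:ℂ) - k) * c k := by rw [hc, pow_succ]; ring
  set r : ℝ := (1 + ‖x‖)/2 with hrdef
  have hr0 : 0 < r := by positivity
  have hr1 : r < 1 := by rw [hrdef]; linarith
  have hxr : ‖x‖ < r := by rw [hrdef]; linarith
  set u : ℕ → ℝ := fun k => (k:ℝ) * r ^ (k-1) with hu
  have husum : Summable u := by
    rw [← summable_nat_add_iff 1]
    have h1 : Summable (fun n : ℕ => (n:ℝ)^1 * r^n + r^n) :=
      (summable_pow_mul_geometric_of_norm_lt_one 1 (by rwa [Real.norm_eq_abs, abs_of_pos hr0])).add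
        (summable_geometric_of_lt_one hr0.le hr1)
    refine h1.congr fun n => ?_
    simp only [hu, Nat.add_sub_cancel]
    push_cast
    ring
  set G : ℂ → ℂ := fun y => ∑' k, c k * y ^ k with hG
  set S : ℂ → ℂ := fun y => ∑' k, c k * ((k:ℂ) * y ^ (k-1)) with hS
  have hbound : ∀ (k : ℕ) (y : ℂ), y ∈ Metric.ball (0:ℂ) r →
      ‖c k * ((k:ℂ) * y ^ (k-1))‖ ≤ u k := by
    intro k y hy
    rw [mem_ball_zero_iff] at hy
    simp only [hc, norm_mul, norm_pow, norm_neg, norm_one, one_pow, one_mul, Complex.norm_natCast]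
    calc ‖gbc (α:ℂ) k‖ * ((k:ℝ) * ‖y‖ ^ (k-1)) ≤ 1 * ((k:ℝ) * r ^ (k-1)) := by
          apply mul_le_mul (gbc_abs_le hα k) _ (by positivity) zero_le_one
          exact mul_le_mul_of_nonneg_left
            (pow_le_pow_left₀ (norm_nonneg y) hy.le _) (Nat.cast_nonneg k)
    _ = u k := by rw [hu, one_mul]
  have hderiv : ∀ y ∈ Metric.ball (0:ℂ) r, HasDerivAt G (S y) y := by
    intro y hy
    exact hasDerivAt_tsum_of_isPreconnected husum Metric.isOpen_ball
      (convex_ball _ _).isPreconnected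
      (fun k z _ => (hasDerivAt_pow k z).const_mul (c k)) hbound
      (Metric.mem_ball_self hr0)
      (summable_series hα (x := 0) (by simp))
      hy
  have hsum_at : ∀ y : ℂ, ‖y‖ < r → Summable (fun k => c k * ((k:ℂ) * y ^ (k-1))) := by
    intro y hy
    exact Summable.of_norm_bounded husum
      (fun k => hbound k y (mem_ball_zero_iff.mpr hy))
  have hODE : ∀ y ∈ Metric.ball (0:ℂ) r, (1 - y) * S y = -(α:ℂ) * G y := by
    intro y hy
    have hyr : ‖y‖ < r := mem_ball_zero_iff.mp hy
    have hy1 : ‖y‖ < 1 := hyr.trans hr1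
    have s2 := hsum_at y hyr
    have hSy : S y = ∑' (k : ℕ), c k * ((k:ℂ) * y ^ (k-1)) := rfl
    have hshift : S y = ∑' k : ℕ, (c (k+1) * ((k:ℂ)+1)) * y ^ k := by
      rw [hSy, s2.tsum_eq_zero_add]
      simp only [Nat.cast_zero, zero_mul, mul_zero, zero_add]
      apply tsum_congr
      intro k
      simp only [Nat.add_sub_cancel]
      push_cast
      ring
    have hyS : y * S y = ∑' k : ℕ, ((k:ℂ) * c k) * y ^ k := by
      rw [hSy, ← tsum_mul_left]
      apply tsum_congr
      intro k
      cases k with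
      | zero => simp
      | succ k => simp only [Nat.add_sub_cancel]; push_cast; ring
    have hgeom : Summable (fun k : ℕ => ((k:ℝ)+1) * ‖y‖ ^ k) := by
      have h1 : Summable (fun n : ℕ => (n:ℝ)^1 * ‖y‖^n + ‖y‖^n) :=
        (summable_pow_mul_geometric_of_norm_lt_one 1
          (by rwa [Real.norm_eq_abs, _root_.abs_of_nonneg (norm_nonneg y)])).add
          (summable_geometric_of_lt_one (norm_nonneg y) hy1)
      exact h1.congr fun n => by push_cast; ring
    have sA : Summable (fun k : ℕ => (c (k+1) * ((k:ℂ)+1)) * y ^ k) := by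
      apply Summable.of_norm_bounded hgeom
      intro k
      rw [hck k, norm_mul, norm_mul, norm_pow, norm_neg]
      calc ‖(α:ℂ) - (k:ℂ)‖ * ‖c k‖ * ‖y‖^k ≤ (((k:ℝ)+1) * 1) * ‖y‖^k := by
            apply mul_le_mul_of_nonneg_right _ (by positivity)
            exact mul_le_mul (abs_sub_nat_le hα k) (habs k) (norm_nonneg _) (by positivity)
      _ = ((k:ℝ)+1) * ‖y‖^k := by ring
    have sB : Summable (fun k : ℕ => ((k:ℂ) * c k) * y ^ k) := by
      apply Summable.of_norm_bounded hgeom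
      intro k
      rw [norm_mul, norm_mul, norm_pow, Complex.norm_natCast]
      calc (k:ℝ) * ‖c k‖ * ‖y‖^k ≤ (((k:ℝ)+1) * 1) * ‖y‖^k := by
            apply mul_le_mul_of_nonneg_right _ (by positivity)
            exact mul_le_mul (by linarith) (habs k) (norm_nonneg _) (by positivity)
      _ = ((k:ℝ)+1) * ‖y‖^k := by ring
    calc (1 - y) * S y
        = (∑' k : ℕ, (c (k+1) * ((k:ℂ)+1)) * y ^ k) - ∑' k : ℕ, ((k:ℂ) * c k) * y ^ k := by
          rw [sub_mul, one_mul, hyS, hshift]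
      _ = ∑' k : ℕ, ((c (k+1) * ((k:ℂ)+1)) * y ^ k - ((k:ℂ) * c k) * y ^ k) :=
          (sA.tsum_sub sB).symm
      _ = ∑' k : ℕ, -(α:ℂ) * (c k * y ^ k) := by
          apply tsum_congr; intro k; rw [hck k]; ring
      _ = -(α:ℂ) * G y := by rw [tsum_mul_left]
  have hslit : ∀ y : ℂ, ‖y‖ < r → (1 - y) ∈ slitPlane := by
    intro y hy
    rw [Complex.mem_slitPlane_iff]
    left
    have h1 : |y.re| ≤ ‖y‖ := Complex.abs_re_le_norm y
    have h2 : ‖y‖ < 1 := lt_of_lt_of_le (hy.trans hr1) (le_of_eq rfl)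
    simp only [sub_re, one_re]
    have := (abs_le.mp h1).2
    linarith
  set Φ : ℂ → ℂ := fun y => G y * (1 - y) ^ (-(α:ℂ)) with hΦ
  have hΦderiv : ∀ y ∈ Metric.ball (0:ℂ) r, HasDerivAt Φ 0 y := by
    intro y hy
    have hyr : ‖y‖ < r := mem_ball_zero_iff.mp hy
    have h1y : (1 - y) ≠ 0 := slitPlane_ne_zero (hslit y hyr)
    have hbase : HasDerivAt (fun z : ℂ => 1 - z) (-1) y := (hasDerivAt_id y).const_sub 1
    have hd2 : HasDerivAt (fun z : ℂ => (1 - z) ^ (-(α:ℂ)))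
        (-(α:ℂ) * (1 - y) ^ (-(α:ℂ) - 1) * (-1)) y :=
      HasDerivAt.cpow_const hbase (hslit y hyr)
    have hmul := (hderiv y hy).mul hd2
    refine hmul.congr_deriv ?_
    symm
    have hsplit : (1 - y) ^ (-(α:ℂ)) = (1 - y) ^ (-(α:ℂ) - 1) * (1 - y) := by
      nth_rewrite 1 [show (1 - y) ^ (-(α:ℂ)) = (1 - y) ^ (-(α:ℂ) - 1 + 1) by norm_num]
      rw [Complex.cpow_add _ _ h1y, Complex.cpow_one]
    rw [hsplit]
    calc (0:ℂ) = (1 - y)^(-(α:ℂ)-1) * ((1 - y) * S y + (α:ℂ) * G y) := by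
          rw [hODE y hy]; ring
    _ = _ := by ring
  have hxr2 : x ∈ Metric.ball (0:ℂ) r := mem_ball_zero_iff.mpr hxr
  have h0r : (0:ℂ) ∈ Metric.ball (0:ℂ) r := Metric.mem_ball_self hr0
  have hconst : Φ x = Φ 0 := by
    apply Convex.is_const_of_fderivWithin_eq_zero (convex_ball _ _)
      (fun y hy => ((hΦderiv y hy).differentiableAt).differentiableWithinAt)
      _ hxr2 h0r
    intro y hy
    rw [fderivWithin_of_isOpen Metric.isOpen_ball hy,
      ((hΦderiv y hy).hasFDerivAt).fderiv]
    ext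
    simp
  have hG0 : G 0 = 1 := by
    have hGr : G 0 = ∑' (k : ℕ), c k * (0:ℂ) ^ k := rfl
    rw [hGr, tsum_eq_single 0 (fun k hk => by simp [zero_pow hk])]
    simp [hc, gbc_zero]
  have hΦ0 : Φ 0 = 1 := by
    have hΦr : Φ 0 = G 0 * (1 - (0:ℂ)) ^ (-(α:ℂ)) := rfl
    rw [hΦr, hG0, sub_zero, Complex.one_cpow, one_mul]
  have hfin : G x * (1 - x) ^ (-(α:ℂ)) = 1 := hconst.trans hΦ0
  have hGx : G x = ((1 - x) ^ (-(α:ℂ)))⁻¹ := eq_inv_of_mul_eq_one_left hfin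
  rw [Complex.cpow_neg, inv_inv] at hGx
  exact hGx

lemma symbolF_eq {α : ℝ} (hα : α ∈ Set.Ioo (0:ℝ) 1) {z : ℂ} (hz : 1 < ‖z‖) :
    symbolF α z = z * (1 - z⁻¹) ^ (α:ℂ) := by
  unfold symbolF
  congr 1
  apply series_eq_cpow hα
  rw [norm_inv]
  exact inv_lt_one_of_one_lt₀ hz

lemma symbolF_conj (α : ℝ) (z : ℂ) :
    symbolF α ((starRingEnd ℂ) z) = (starRingEnd ℂ) (symbolF α z) := by
  unfold symbolF
  rw [map_mul]
  congr 1
  rw [show (starRingEnd ℂ) (∑' (k : ℕ), ((-1:ℂ)^k * gbc (α:ℂ) k) * z⁻¹ ^ k)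
      = star (∑' (k : ℕ), ((-1:ℂ)^k * gbc (α:ℂ) k) * z⁻¹ ^ k) from rfl, tsum_star]
  apply tsum_congr
  intro k
  have : star (((-1 : ℂ) ^ k * gbc (α:ℂ) k) * z⁻¹ ^ k)
      = (starRingEnd ℂ) (((-1 : ℂ) ^ k * gbc (α:ℂ) k) * z⁻¹ ^ k) := rfl
  rw [this, map_mul, map_mul, map_pow, map_pow, map_neg, map_one, gbc_conj, map_inv₀]

/-- the real symbol function -/
noncomputable def Fr (α : ℝ) (x : ℝ) : ℝ := x * (1 - x⁻¹) ^ α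

lemma base_pos {x : ℝ} (hx : 1 < |x|) : 0 < 1 - x⁻¹ := by
  rcases lt_abs.mp hx with h | h
  · have h0 : 0 < x := lt_trans one_pos h
    have := (inv_lt_one₀ h0).mpr h
    linarith
  · have hx0 : x < 0 := by linarith
    have : x⁻¹ < 0 := inv_neg''.mpr hx0
    linarith

lemma symbolF_ofReal {α : ℝ} (hα : α ∈ Set.Ioo (0:ℝ) 1) {x : ℝ} (hx : 1 < |x|) :
    symbolF α (x:ℂ) = ((Fr α x : ℝ) : ℂ) := by
  rw [symbolF_eq hα (by rwa [Complex.norm_real, Real.norm_eq_abs])]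
  have hb : (0:ℝ) ≤ 1 - x⁻¹ := (base_pos hx).le
  have h1 : (1 - (x:ℂ)⁻¹) = (((1 - x⁻¹ : ℝ)) : ℂ) := by push_cast; ring
  rw [h1, ← Complex.ofReal_cpow hb, Fr, Complex.ofReal_mul]

lemma Fr_pos {α : ℝ} (hα : α ∈ Set.Ioo (0:ℝ) 1) {x : ℝ} (hx : 1 < x) : 0 < Fr α x := by
  have hb : 0 < 1 - x⁻¹ := base_pos (by rw [abs_of_pos (by linarith)]; exact hx)
  exact mul_pos (by linarith) (Real.rpow_pos_of_pos hb α)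

lemma Fr_neg {α : ℝ} (hα : α ∈ Set.Ioo (0:ℝ) 1) {x : ℝ} (hx : x < -1) :
    Fr α x < -(2:ℝ) ^ α := by
  set t : ℝ := -x with ht
  have ht1 : 1 < t := by rw [ht]; linarith
  have ht0 : 0 < t := lt_trans one_pos ht1
  have hx0 : x ≠ 0 := by intro h; rw [h] at hx; linarith
  have hxinv : x⁻¹ = -t⁻¹ := by rw [ht]; field_simp
  have hFr : Fr α x = -(t * (1 + t⁻¹) ^ α) := by
    rw [Fr, hxinv, ht]; ring_nf
  rw [hFr, neg_lt_neg_iff]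
  have hsplit : t * (1 + t⁻¹) ^ α = t ^ (1 - α) * (t + 1) ^ α := by
    have h1 : t = t ^ (1 - α) * t ^ α := by
      rw [← Real.rpow_add ht0]; norm_num
    have h2 : t ^ α * (1 + t⁻¹) ^ α = (t * (1 + t⁻¹)) ^ α := by
      rw [← Real.mul_rpow ht0.le (by positivity)]
    have h3 : t * (1 + t⁻¹) = t + 1 := by field_simp
    calc t * (1 + t⁻¹) ^ α = (t ^ (1 - α) * t ^ α) * (1 + t⁻¹) ^ α := by rw [← h1]
    _ = t ^ (1 - α) * (t ^ α * (1 + t⁻¹) ^ α) := by ring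
    _ = t ^ (1 - α) * (t + 1) ^ α := by rw [h2, h3]
  rw [hsplit]
  have h4 : (2:ℝ) ^ α < (t + 1) ^ α := Real.rpow_lt_rpow (by norm_num) (by linarith) hα.1
  have h5 : (1:ℝ) < t ^ (1 - α) := by
    rw [Real.one_lt_rpow_iff_of_pos ht0]
    left
    exact ⟨ht1, by linarith [hα.2]⟩
  calc (2:ℝ) ^ α < (t + 1) ^ α := h4
  _ = 1 * (t + 1) ^ α := (one_mul _).symm
  _ < t ^ (1 - α) * (t + 1) ^ α := by
      apply mul_lt_mul_of_pos_right h5 (Real.rpow_pos_of_pos (by linarith) α)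

lemma Fr_continuousOn {α : ℝ} (hα : α ∈ Set.Ioo (0:ℝ) 1) {s : Set ℝ}
    (hs : ∀ x ∈ s, x ≠ 0) : ContinuousOn (Fr α) s := by
  apply ContinuousOn.mul continuousOn_id
  apply ContinuousOn.rpow_const
  · exact (continuousOn_const).sub (continuousOn_id.inv₀ hs)
  · exact fun x hx => Or.inr hα.1.le

lemma Fr_surj_pos {α : ℝ} (hα : α ∈ Set.Ioo (0:ℝ) 1) {y : ℝ} (hy : 0 < y) :
    ∃ x : ℝ, 1 < x ∧ Fr α x = y := by
  -- small endpoint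
  have hcont1 : ContinuousAt (Fr α) 1 := by
    apply ContinuousAt.mul continuousAt_id
    apply ContinuousAt.rpow_const
    · exact (continuousAt_const).sub (continuousAt_id.inv₀ one_ne_zero)
    · right; exact hα.1.le
  have hF1 : Fr α 1 = 0 := by
    simp [Fr, Real.zero_rpow hα.1.ne']
  have htend : Filter.Tendsto (Fr α) (nhdsWithin 1 (Set.Ioi 1)) (nhds 0) := by
    rw [← hF1]
    exact hcont1.continuousWithinAt.tendsto
  have hev : ∀ᶠ a in nhdsWithin 1 (Set.Ioi 1), Fr α a < y ∧ 1 < a := by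
    filter_upwards [htend.eventually_lt_const hy, self_mem_nhdsWithin] with a h1 h2
    exact ⟨h1, h2⟩
  obtain ⟨a, haF, ha1⟩ := hev.exists
  -- large endpoint
  set b : ℝ := max (max 2 (y * (2:ℝ)^α + 1)) a with hb
  have hb2 : (2:ℝ) ≤ b := le_trans (le_max_left _ _) (le_max_left _ _)
  have hby : y * (2:ℝ)^α + 1 ≤ b := le_trans (le_max_right _ _) (le_max_left _ _)
  have hab : a ≤ b := le_max_right _ _
  have hbpos : (0:ℝ) < b := by linarith
  have hbF : y < Fr α b := by
    have h1 : b⁻¹ ≤ 2⁻¹ := by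
      apply inv_anti₀ (by norm_num) hb2
    have h2 : (1:ℝ)/2 ≤ 1 - b⁻¹ := by
      rw [one_div]; linarith
    have h3 : ((1:ℝ)/2) ^ α ≤ (1 - b⁻¹) ^ α :=
      Real.rpow_le_rpow (by norm_num) h2 hα.1.le
    have h5 : (2:ℝ)^α * ((1:ℝ)/2)^α = 1 := by
      rw [← Real.mul_rpow (by norm_num) (by norm_num)]
      norm_num
    calc y = (y * (2:ℝ)^α) * ((1:ℝ)/2)^α := by
          rw [mul_assoc, h5, mul_one]
    _ < b * ((1:ℝ)/2)^α := by
          apply mul_lt_mul_of_pos_right _ (Real.rpow_pos_of_pos (by norm_num) α)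
          have h6 : (0:ℝ) < (2:ℝ)^α := Real.rpow_pos_of_pos (by norm_num) α
          nlinarith
    _ ≤ b * (1 - b⁻¹)^α := by
          apply mul_le_mul_of_nonneg_left h3 hbpos.le
    _ = Fr α b := rfl
  -- IVT
  have hcont : ContinuousOn (Fr α) (Set.Icc a b) := by
    apply Fr_continuousOn hα
    intro x hx
    have := hx.1
    intro h; rw [h] at this; linarith
  have hmem : y ∈ Set.Icc (Fr α a) (Fr α b) := ⟨haF.le, hbF.le⟩
  obtain ⟨c, hc, hFc⟩ := intermediate_value_Icc hab hcont hmem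
  exact ⟨c, lt_of_lt_of_le ha1 hc.1, hFc⟩

lemma Fr_surj_neg {α : ℝ} (hα : α ∈ Set.Ioo (0:ℝ) 1) {y : ℝ} (hy : y < -(2:ℝ)^α) :
    ∃ x : ℝ, x < -1 ∧ Fr α x = y := by
  have h2a : (1:ℝ) ≤ (2:ℝ)^α := Real.one_le_rpow (by norm_num) hα.1.le
  -- left endpoint a := y - 1
  set a : ℝ := y - 1 with ha
  have ha2 : a < -2 := by rw [ha]; linarith
  have ha0 : a < 0 := by linarith
  have hFa : Fr α a ≤ a := by
    have hbase : (1:ℝ) ≤ 1 - a⁻¹ := by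
      have : a⁻¹ < 0 := inv_neg''.mpr ha0
      linarith
    have h1 : (1:ℝ) ≤ (1 - a⁻¹) ^ α := Real.one_le_rpow hbase hα.1.le
    calc Fr α a = a * (1 - a⁻¹) ^ α := rfl
    _ ≤ a * 1 := mul_le_mul_of_nonpos_left h1 ha0.le
    _ = a := mul_one a
  -- right endpoint near -1
  have hcont1 : ContinuousAt (Fr α) (-1) := by
    apply ContinuousAt.mul continuousAt_id
    apply ContinuousAt.rpow_const
    · exact (continuousAt_const).sub (continuousAt_id.inv₀ (by norm_num))
    · right; exact hα.1.le
  have hFm1 : Fr α (-1) = -(2:ℝ)^α := by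
    simp only [Fr]
    norm_num
  have htend : Filter.Tendsto (Fr α) (nhdsWithin (-1) (Set.Iio (-1))) (nhds (-(2:ℝ)^α)) := by
    rw [← hFm1]
    exact hcont1.continuousWithinAt.tendsto
  have hev : ∀ᶠ b in nhdsWithin (-1) (Set.Iio (-1)),
      (y < Fr α b ∧ b < -1) ∧ b ∈ Set.Ioo (-2:ℝ) (-1) := by
    filter_upwards [htend.eventually_const_lt hy, self_mem_nhdsWithin,
      Ioo_mem_nhdsLT (by norm_num : (-2:ℝ) < -1)] with b h1 h2 h3
    exact ⟨⟨h1, h2⟩, h3⟩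
  obtain ⟨b, ⟨hbF, hb1⟩, hb2⟩ := hev.exists
  have hab : a ≤ b := by linarith [hb2.1]
  have hcont : ContinuousOn (Fr α) (Set.Icc a b) := by
    apply Fr_continuousOn hα
    intro x hx
    have := hx.2
    intro h; rw [h] at this; linarith
  have hmem : y ∈ Set.Icc (Fr α a) (Fr α b) := ⟨by linarith, hbF.le⟩
  obtain ⟨c, hc, hFc⟩ := intermediate_value_Icc hab hcont hmem
  exact ⟨c, lt_of_le_of_lt hc.2 hb1, hFc⟩

lemma im_ofReal_mul_exp (c t : ℝ) :
    ((c:ℂ) * Complex.exp (((t:ℝ):ℂ) * Complex.I)).im = c * Real.sin t := by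
  rw [Complex.exp_mul_I, ← Complex.ofReal_cos, ← Complex.ofReal_sin]
  simp [Complex.mul_im, Complex.add_im, Complex.add_re, Complex.ofReal_re, Complex.ofReal_im,
    Complex.mul_re, Complex.I_re, Complex.I_im, Complex.sin_ofReal_re, Complex.cos_ofReal_re]

lemma symbolF_im_pos {α : ℝ} (hα : α ∈ Set.Ioo (0:ℝ) 1) {z : ℂ}
    (hz : 1 < ‖z‖) (him : 0 < z.im) : 0 < (symbolF α z).im := by
  have hz0 : z ≠ 0 := by
    intro h; rw [h] at hz; simp at hz; linarith
  have hns : 0 < Complex.normSq z := Complex.normSq_pos.mpr hz0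
  set w : ℂ := 1 - z⁻¹ with hw
  have hwre : w.re = 1 - z.re / Complex.normSq z := by
    rw [hw, Complex.sub_re, Complex.one_re, Complex.inv_re]
  have hwim : w.im = z.im / Complex.normSq z := by
    rw [hw, Complex.sub_im, Complex.one_im, Complex.inv_im]
    ring
  have habs2 : Complex.normSq z = ‖z‖ ^ 2 := (Complex.sq_norm z).symm
  have hre_lt : z.re / Complex.normSq z < 1 := by
    have h1 : z.re ≤ ‖z‖ := Complex.re_le_norm z
    have h2 : ‖z‖ < Complex.normSq z := by
      rw [habs2]; nlinarith
    calc z.re / Complex.normSq z ≤ ‖z‖ / Complex.normSq z := by gcongr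
    _ < 1 := (div_lt_one hns).mpr h2
  have hwre_pos : 0 < w.re := by rw [hwre]; linarith
  have hwim_pos : 0 < w.im := by rw [hwim]; positivity
  have hw0 : w ≠ 0 := by
    intro h
    rw [h] at hwre_pos
    simp at hwre_pos
  set θ : ℝ := Complex.arg z with hθ
  set φ : ℝ := Complex.arg w with hφ
  have hθ0 : 0 < θ := by
    rcases lt_or_eq_of_le (Complex.arg_nonneg_iff.mpr him.le) with h | h
    · exact h
    · exfalso
      have := Complex.arg_eq_zero_iff.mp h.symm
      linarith [this.2, him]
  have hθπ : θ < Real.pi := Complex.arg_lt_pi_iff.mpr (Or.inr him.ne')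
  have hφ0 : 0 < φ := by
    rcases lt_or_eq_of_le (Complex.arg_nonneg_iff.mpr hwim_pos.le) with h | h
    · exact h
    · exfalso
      have := Complex.arg_eq_zero_iff.mp h.symm
      linarith [this.2, hwim_pos]
  have hφ2 : φ < Real.pi / 2 :=
    Complex.arg_lt_pi_div_two_iff.mpr (Or.inl hwre_pos)
  have hαφ : α * φ < φ := by
    nlinarith [hα.2, hφ0]
  have hsum_pos : 0 < θ + α * φ := by nlinarith [hα.1, hφ0]
  have hsum_lt : θ + α * φ < Real.pi := by
    rcases le_or_gt θ (Real.pi / 2) with hc | hc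
    · nlinarith
    · -- z.re < 0
      have hre_neg : z.re < 0 := by
        by_contra h
        push_neg at h
        have hle : θ ≤ Real.pi / 2 := by
          rw [hθ, Complex.arg_of_re_nonneg h]
          exact Real.arcsin_le_pi_div_two _
        linarith
      have hφlt : φ < Real.pi - θ := by
        have hπθ1 : 0 < Real.pi - θ := by linarith
        have hπθ2 : Real.pi - θ < Real.pi / 2 := by linarith
        have htanφ : Real.tan φ = w.im / w.re := Complex.tan_arg w
        have htanθ : Real.tan (Real.pi - θ) = z.im / (-z.re) := by
          rw [Real.tan_pi_sub, Complex.tan_arg]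
          simp [neg_div, div_neg]
        have hd1 : 0 < Complex.normSq z - z.re := by linarith
        have hlt : Real.tan φ < Real.tan (Real.pi - θ) := by
          rw [htanφ, htanθ]
          have h1 : w.im / w.re = z.im / (Complex.normSq z - z.re) := by
            have hne2 : (1 - z.re / Complex.normSq z) ≠ 0 := by
              rw [← hwre]; exact hwre_pos.ne'
            rw [hwre, hwim]
            field_simp
          rw [h1]
          exact div_lt_div_of_pos_left him (by linarith) (by linarith)
        by_contra hcon
        push_neg at hcon
        have hmono := Real.strictMonoOn_tan.monotoneOn
          (a := Real.pi - θ) (b := φ)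
          ⟨by linarith [Real.pi_pos], by linarith⟩ ⟨by linarith, hφ2⟩ hcon
        linarith
      nlinarith
  -- polar representation
  have hzeq : z = (‖z‖ : ℂ) * Complex.exp ((θ:ℂ) * Complex.I) :=
    (Complex.norm_mul_exp_arg_mul_I z).symm
  have hwpow : w ^ (α:ℂ) = ((Real.exp (α * Real.log (‖w‖)) : ℝ) : ℂ)
      * Complex.exp (((α * φ : ℝ) : ℂ) * Complex.I) := by
    rw [Complex.cpow_def_of_ne_zero hw0]
    have hlog : Complex.log w = ((Real.log (‖w‖) : ℝ) : ℂ) + (φ:ℝ) * Complex.I := by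
      rw [Complex.log]
    rw [hlog]
    have hmul : (((Real.log (‖w‖) : ℝ) : ℂ) + (φ:ℝ) * Complex.I) * (α:ℂ)
        = ((α * Real.log (‖w‖) : ℝ) : ℂ) + ((α * φ : ℝ) : ℂ) * Complex.I := by
      push_cast; ring
    rw [hmul, Complex.exp_add, Complex.ofReal_exp]
  have hmain : symbolF α z = ((‖z‖ * Real.exp (α * Real.log (‖w‖)) : ℝ) : ℂ)
      * Complex.exp (((θ + α * φ : ℝ) : ℂ) * Complex.I) := by
    rw [symbolF_eq hα hz, ← hw, hwpow]
    nth_rewrite 1 [hzeq]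
    rw [Complex.ofReal_mul, Complex.ofReal_add, add_mul, Complex.exp_add]
    push_cast
    ring
  rw [hmain, im_ofReal_mul_exp]
  have hsin : 0 < Real.sin (θ + α * φ) := Real.sin_pos_of_pos_of_lt_pi hsum_pos hsum_lt
  have habspos : 0 < ‖z‖ := lt_trans one_pos hz
  positivity

/-- The image under `f(z) = z(1-z⁻¹)^α` of the real points of `{|z| > 1}` is
`(-∞, -2^α) ∪ (0, ∞)`; consequently a real `λ` is not in the range of `f` on `{|z| > 1}`
if and only if `λ ∈ [-2^α, 0]`. -/
theorem symbolF_real_range (α : ℝ) (hα : α ∈ Set.Ioo (0:ℝ) 1) :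
    (symbolF α '' {z : ℂ | 1 < ‖z‖ ∧ z.im = 0}
      = {w : ℂ | w.im = 0 ∧ (w.re < -(2 : ℝ) ^ α ∨ 0 < w.re)}) ∧
    ∀ l : ℝ, (¬ ∃ z : ℂ, 1 < ‖z‖ ∧ symbolF α z = (l : ℂ)) ↔
      (-(2 : ℝ) ^ α ≤ l ∧ l ≤ 0) := by
  have himage : symbolF α '' {z : ℂ | 1 < ‖z‖ ∧ z.im = 0}
      = {w : ℂ | w.im = 0 ∧ (w.re < -(2 : ℝ) ^ α ∨ 0 < w.re)} := by
    ext v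
    constructor
    · rintro ⟨z, ⟨hz, him⟩, rfl⟩
      have hzx : z = ((z.re : ℝ) : ℂ) := Complex.ext rfl (by simp [him])
      have hx : 1 < |z.re| := by
        rw [hzx, Complex.norm_real, Real.norm_eq_abs] at hz
        exact hz
      rw [hzx, symbolF_ofReal hα hx]
      refine ⟨by simp, ?_⟩
      simp only [Complex.ofReal_re]
      rcases lt_abs.mp hx with h | h
      · exact Or.inr (Fr_pos hα h)
      · exact Or.inl (Fr_neg hα (by linarith))
    · rintro ⟨him, hre⟩
      have hvx : v = ((v.re : ℝ) : ℂ) := Complex.ext rfl (by simp [him])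
      rcases hre with h | h
      · obtain ⟨x, hx1, hxF⟩ := Fr_surj_neg hα h
        refine ⟨(x:ℂ), ⟨?_, by simp⟩, ?_⟩
        · rw [Complex.norm_real, Real.norm_eq_abs, abs_of_neg (by linarith)]; linarith
        · rw [symbolF_ofReal hα (by rw [abs_of_neg (by linarith)]; linarith), hxF, hvx]; simp
      · obtain ⟨x, hx1, hxF⟩ := Fr_surj_pos hα h
        refine ⟨(x:ℂ), ⟨?_, by simp⟩, ?_⟩
        · rw [Complex.norm_real, Real.norm_eq_abs, abs_of_pos (by linarith)]; exact hx1
        · rw [symbolF_ofReal hα (by rw [abs_of_pos (by linarith)]; exact hx1), hxF, hvx]; simp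
  refine ⟨himage, fun l => ⟨?_, ?_⟩⟩
  · intro hnot
    by_contra hc
    rw [not_and_or, not_le, not_le] at hc
    rcases hc with h | h
    · obtain ⟨x, hx1, hxF⟩ := Fr_surj_neg hα h
      apply hnot
      refine ⟨(x:ℂ), ?_, ?_⟩
      · rw [Complex.norm_real, Real.norm_eq_abs, abs_of_neg (by linarith)]; linarith
      · rw [symbolF_ofReal hα (by rw [abs_of_neg (by linarith)]; linarith), hxF]
    · obtain ⟨x, hx1, hxF⟩ := Fr_surj_pos hα h
      apply hnot
      refine ⟨(x:ℂ), ?_, ?_⟩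
      · rw [Complex.norm_real, Real.norm_eq_abs, abs_of_pos (by linarith)]; exact hx1
      · rw [symbolF_ofReal hα (by rw [abs_of_pos (by linarith)]; exact hx1), hxF]
  · rintro ⟨h1, h2⟩ ⟨z, hz, hlz⟩
    rcases lt_trichotomy z.im 0 with him | him | him
    · have hcz : 0 < ((starRingEnd ℂ) z).im := by
        rw [Complex.conj_im]; linarith
      have habs : 1 < ‖(starRingEnd ℂ) z‖ := by rwa [Complex.norm_conj]
      have := symbolF_im_pos hα habs hcz
      rw [symbolF_conj, hlz, Complex.conj_ofReal] at this
      simp at this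
    · have : ((l:ℝ):ℂ) ∈ symbolF α '' {z : ℂ | 1 < ‖z‖ ∧ z.im = 0} :=
        ⟨z, ⟨hz, him⟩, hlz⟩
      rw [himage] at this
      obtain ⟨-, hor⟩ := this
      simp only [Complex.ofReal_re] at hor
      rcases hor with h | h
      · linarith
      · linarith
    · have := symbolF_im_pos hα hz him
      rw [hlz] at this
      simp at this
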